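/- Fix δ ≥ −1 and for a > 1 set σ(a) := (8(a+δ))^{−1/2} and R(a) := sup_{x ∈ (0,1)} β_{a,a}(x)/φ_{1/2,σ(a)}(x). Then log R(a) = (δ(δ+1) + 3/4)/(2a) + O(a^{−2}) as a → ∞; that is, there exist constants C > 0 and A > 1 such that for all a ≥ A, |log R(a) − (δ(δ+1) + 3/4)/(2a)| ≤ C/a². -/

import Mathlib

open MeasureTheory

/-- The Beta function `B(a,b) = ∫₀¹ t^{a-1} (1-t)^{b-1} dt`. -/
noncomputable def betaFn (a b : ℝ) : ℝ :=
  ∫ t in (0:ℝ)..1, t ^ (a - 1) * (1 - t) ^ (b - 1)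

/-- Density of the symmetric Beta(a,a) distribution on (0,1). -/
noncomputable def betaSymPDF (a t : ℝ) : ℝ :=
  (betaFn a a)⁻¹ * t ^ (a - 1) * (1 - t) ^ (a - 1)

/-- Density of the normal distribution N(1/2, σ²). -/
noncomputable def gaussPDF (σ x : ℝ) : ℝ :=
  (Real.sqrt (2 * Real.pi * σ ^ 2))⁻¹ * Real.exp (-(x - 1 / 2) ^ 2 / (2 * σ ^ 2))

/-- `R(a) = sup_{x ∈ (0,1)} β_{a,a}(x) / φ_{1/2, σ(a)}(x)` with
`σ(a) = (8(a+δ))^{-1/2}`. -/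
noncomputable def Rratio (δ a : ℝ) : ℝ :=
  ⨆ x : Set.Ioo (0:ℝ) 1, betaSymPDF a x / gaussPDF ((8 * (a + δ)) ^ (-(1:ℝ) / 2)) x

/-! With `p = x (1 - x)`, the logarithm of `β_{a,a}(x) / φ_{1/2,σ(a)}(x)` is
`(a - 1) log p - 4 (a + δ) p` plus a constant, which is maximal at `p = (a - 1) / (4 (a + δ))`;
this is an admissible value `≤ 1/4` exactly because `δ ≥ -1`. Legendre's duplication formula
writes `B(a,a)` as `2^(1-2a) √π Γ(a) / Γ(a + 1/2)`, the powers of `2` and `π` cancel, and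
`log R(a) = log (Γ(a + 1/2) / Γ(a)) - log (a + δ) / 2 + (a - 1) log ((a - 1) / (a + δ)) + δ + 1`.

The Gamma ratio is controlled through `f = gammaHalfDefect`, the logarithm of
`(Γ(x + 1/2) / Γ(x))² / (x - 1/4)`: log-convexity of `Γ` squeezes `(Γ(x + 1/2) / Γ(x))²` between
`x - 1/2` and `x`, so `f → 0`, while `f(x) - f(x + 1) = log (N / (N - 1/16))` with
`N = x² (x + 3/4)` is nonnegative and `O(x⁻³)`; telescoping gives `0 ≤ f(x) ≤ 1 / (16 x²)`.
The remaining terms are second and third order Taylor expansions of `log` at `1`. -/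

open Real Filter Topology

theorem betaFn_eq_beta {a b : ℝ} (ha : 0 < a) (hb : 0 < b) :
    betaFn a b = ProbabilityTheory.beta a b := by
  have hcast : (betaFn a b : ℂ) = Complex.betaIntegral a b := by
    rw [betaFn, Complex.betaIntegral, ← intervalIntegral.integral_ofReal]
    refine intervalIntegral.integral_congr fun t ht => ?_
    rw [Set.uIcc_of_le zero_le_one] at ht
    have h1t : 0 ≤ 1 - t := by linarith [ht.2]
    push_cast [Complex.ofReal_cpow ht.1, Complex.ofReal_cpow h1t]
    rfl
  rw [ProbabilityTheory.beta_eq_betaIntegralReal a b ha hb, ← hcast, Complex.ofReal_re]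

theorem betaFn_pos {a b : ℝ} (ha : 0 < a) (hb : 0 < b) : 0 < betaFn a b :=
  betaFn_eq_beta ha hb ▸ ProbabilityTheory.beta_pos ha hb

theorem betaFn_self_eq {a : ℝ} (ha : 0 < a) :
    betaFn a a = 2 ^ (1 - 2 * a) * √π * Gamma a / Gamma (a + 1 / 2) := by
  have hdup := Gamma_mul_Gamma_add_half a
  rw [betaFn_eq_beta ha ha, ProbabilityTheory.beta, ← two_mul,
    div_eq_div_iff (Gamma_pos_of_pos (by linarith)).ne' (Gamma_pos_of_pos (by linarith)).ne']
  linear_combination Gamma a * hdup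

theorem betaSymPDF_div_gaussPDF {a m x : ℝ} (hm : 0 < m) (hx : x ∈ Set.Ioo (0 : ℝ) 1) :
    betaSymPDF a x / gaussPDF ((8 * m) ^ (-(1 : ℝ) / 2)) x
      = (betaFn a a)⁻¹ * √(π / (4 * m))
        * exp ((a - 1) * log (x * (1 - x)) + 4 * m * (x - 1 / 2) ^ 2) := by
  obtain ⟨hx0, hx1⟩ := hx
  have h1x : 0 < 1 - x := by linarith
  have hσ : ((8 * m) ^ (-(1 : ℝ) / 2)) ^ 2 = (8 * m)⁻¹ := by
    rw [← rpow_natCast, ← rpow_mul (by positivity)]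
    norm_num [rpow_neg_one]
  have hvar : 2 * π * (8 * m)⁻¹ = π / (4 * m) := by field_simp; ring
  have hexp : -(x - 1 / 2) ^ 2 / (2 * (8 * m)⁻¹) = -(4 * m * (x - 1 / 2) ^ 2) := by
    field_simp; ring
  unfold betaSymPDF gaussPDF
  rw [hσ, hvar, hexp, exp_neg, exp_add, log_mul hx0.ne' h1x.ne', mul_add, exp_add,
    mul_comm (a - 1), mul_comm (a - 1), ← rpow_def_of_pos hx0, ← rpow_def_of_pos h1x]
  have : √(π / (4 * m)) ≠ 0 := by positivity
  field_simp

theorem mul_log_sub_mul_le {c k p : ℝ} (hc : 0 < c) (hk : 0 < k) (hp : 0 < p) :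
    c * log p - k * p ≤ c * log (c / k) - c := by
  have h := log_le_sub_one_of_pos (show 0 < k * p / c by positivity)
  rw [show k * p / c = p / (c / k) by field_simp, log_div hp.ne' (by positivity)] at h
  have := mul_le_mul_of_nonneg_left h hc.le
  rw [show c * (p / (c / k) - 1) = k * p - c by field_simp] at this
  linarith

theorem exists_mem_Ioo_mul_one_sub_eq {q : ℝ} (hq : 0 < q) (hq' : q ≤ 1 / 4) :
    ∃ y ∈ Set.Ioo (0 : ℝ) 1, y * (1 - y) = q := by
  have hs : √(1 - 4 * q) < 1 := by
    rw [sqrt_lt' one_pos]; linarith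
  refine ⟨(1 + √(1 - 4 * q)) / 2, ⟨by positivity, by linarith⟩, ?_⟩
  have := sq_sqrt (show 0 ≤ 1 - 4 * q by linarith)
  linear_combination (-1 / 4 : ℝ) * this

theorem Rratio_eq {δ a : ℝ} (hδ : -1 ≤ δ) (ha : 1 < a) :
    Rratio δ a = (betaFn a a)⁻¹ * √(π / (4 * (a + δ)))
      * exp ((a - 1) * log ((a - 1) / (4 * (a + δ))) + (δ + 1)) := by
  have hm : 0 < a + δ := by linarith
  have hc : 0 < a - 1 := by linarith
  have hB : 0 < betaFn a a := betaFn_pos (by linarith) (by linarith)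
  have hK : 0 < (betaFn a a)⁻¹ * √(π / (4 * (a + δ))) := by positivity
  have hsq (y : ℝ) :
      4 * (a + δ) * (y - 1 / 2) ^ 2 = (a + δ) - 4 * (a + δ) * (y * (1 - y)) := by
    ring
  have hle (y : Set.Ioo (0 : ℝ) 1) :
      betaSymPDF a y / gaussPDF ((8 * (a + δ)) ^ (-(1 : ℝ) / 2)) y
        ≤ (betaFn a a)⁻¹ * √(π / (4 * (a + δ)))
          * exp ((a - 1) * log ((a - 1) / (4 * (a + δ))) + (δ + 1)) := by
    obtain ⟨y, hy0, hy1⟩ := y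
    rw [betaSymPDF_div_gaussPDF hm ⟨hy0, hy1⟩, hsq]
    refine mul_le_mul_of_nonneg_left (exp_le_exp.2 ?_) hK.le
    have := mul_log_sub_mul_le hc (by positivity : 0 < 4 * (a + δ))
      (by nlinarith : 0 < y * (1 - y))
    linarith
  obtain ⟨y, hy, hyq⟩ := exists_mem_Ioo_mul_one_sub_eq (q := (a - 1) / (4 * (a + δ)))
    (by positivity) (by rw [div_le_iff₀ (by positivity)]; linarith)
  have : Nonempty (Set.Ioo (0 : ℝ) 1) := ⟨⟨y, hy⟩⟩
  refine le_antisymm (ciSup_le hle)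
    (le_ciSup_of_le ⟨_, Set.forall_mem_range.2 hle⟩ ⟨y, hy⟩ (le_of_eq ?_))
  rw [betaSymPDF_div_gaussPDF hm hy, hsq, hyq]
  congr 3
  field_simp
  ring

theorem sq_Gamma_midpoint_le {s t : ℝ} (hs : 0 < s) (ht : 0 < t) :
    Gamma ((s + t) / 2) ^ 2 ≤ Gamma s * Gamma t := by
  have h := Gamma_mul_add_mul_le_rpow_Gamma_mul_rpow_Gamma hs ht (a := 1 / 2) (b := 1 / 2)
    (by norm_num) (by norm_num) (by norm_num)
  rw [← sqrt_eq_rpow, ← sqrt_eq_rpow, ← sqrt_mul (Gamma_pos_of_pos hs).le,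
    show 1 / 2 * s + 1 / 2 * t = (s + t) / 2 by ring] at h
  calc Gamma ((s + t) / 2) ^ 2 ≤ √(Gamma s * Gamma t) ^ 2 :=
        pow_le_pow_left₀ (Gamma_pos_of_pos (by positivity)).le h 2
    _ = Gamma s * Gamma t :=
        sq_sqrt (mul_pos (Gamma_pos_of_pos hs) (Gamma_pos_of_pos ht)).le

theorem sq_Gamma_add_half_div_Gamma_le {x : ℝ} (hx : 0 < x) :
    (Gamma (x + 1 / 2) / Gamma x) ^ 2 ≤ x := by
  have h := sq_Gamma_midpoint_le hx (by linarith : 0 < x + 1)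
  rw [show (x + (x + 1)) / 2 = x + 1 / 2 by ring, Gamma_add_one hx.ne'] at h
  rw [div_pow, div_le_iff₀ (pow_pos (Gamma_pos_of_pos hx) 2)]
  linarith

theorem sub_half_le_sq_Gamma_add_half_div_Gamma {x : ℝ} (hx : 1 / 2 < x) :
    x - 1 / 2 ≤ (Gamma (x + 1 / 2) / Gamma x) ^ 2 := by
  have h := sq_Gamma_midpoint_le (by linarith : 0 < x - 1 / 2) (by linarith : 0 < x + 1 / 2)
  rw [show (x - 1 / 2 + (x + 1 / 2)) / 2 = x by ring,
    show x + 1 / 2 = x - 1 / 2 + 1 by ring, Gamma_add_one (by linarith)] at h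
  rw [div_pow, le_div_iff₀ (pow_pos (Gamma_pos_of_pos (by linarith)) 2),
    show x + 1 / 2 = x - 1 / 2 + 1 by ring, Gamma_add_one (by linarith)]
  nlinarith [Gamma_pos_of_pos (by linarith : 0 < x - 1 / 2)]

noncomputable def gammaHalfDefect (x : ℝ) : ℝ :=
  2 * log (Gamma (x + 1 / 2) / Gamma x) - log (x - 1 / 4)

theorem abs_gammaHalfDefect_le {x : ℝ} (hx : 1 / 2 < x) :
    |gammaHalfDefect x| ≤ (4 * x - 2)⁻¹ := by
  have hr_le := sq_Gamma_add_half_div_Gamma_le (by linarith : 0 < x)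
  have hr_ge := sub_half_le_sq_Gamma_add_half_div_Gamma hx
  set r := (Gamma (x + 1 / 2) / Gamma x) ^ 2
  have hr : 0 < r := by linarith
  have hq : 0 < x - 1 / 4 := by linarith
  have hdef : gammaHalfDefect x = log (r / (x - 1 / 4)) := by
    rw [gammaHalfDefect, log_div hr.ne' hq.ne', log_pow]
    push_cast
    ring
  have hf_le := log_le_sub_one_of_pos (div_pos hr hq)
  have hf_ge := one_sub_inv_le_log_of_pos (div_pos hr hq)
  rw [inv_div] at hf_ge
  have h1 : r / (x - 1 / 4) - 1 ≤ (4 * x - 2)⁻¹ := by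
    rw [div_sub_one hq.ne', div_le_iff₀ hq, inv_mul_eq_div, le_div_iff₀ (by linarith)]
    nlinarith
  have h2 : (x - 1 / 4) / r - 1 ≤ (4 * x - 2)⁻¹ := by
    rw [div_sub_one hr.ne', div_le_iff₀ hr, inv_mul_eq_div, le_div_iff₀ (by linarith)]
    nlinarith
  rw [hdef, abs_le]
  constructor <;> linarith

theorem tendsto_gammaHalfDefect_atTop : Tendsto gammaHalfDefect atTop (𝓝 0) := by
  have hlim : Tendsto (fun x : ℝ => (4 * x - 2)⁻¹) atTop (𝓝 0) :=
    tendsto_inv_atTop_zero.comp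
      (tendsto_atTop_add_const_right _ _ (tendsto_id.const_mul_atTop (by norm_num)))
  refine squeeze_zero_norm' ?_ hlim
  filter_upwards [eventually_gt_atTop (1 / 2)] with x hx
  exact abs_gammaHalfDefect_le hx

theorem gammaHalfDefect_sub_add_one {x : ℝ} (hx : 1 / 4 < x) :
    gammaHalfDefect x - gammaHalfDefect (x + 1)
      = log (x ^ 2 * (x + 3 / 4) / ((x + 1 / 2) ^ 2 * (x - 1 / 4))) := by
  have hx0 : 0 < x := by linarith
  have hG := Gamma_pos_of_pos hx0
  have hG' := Gamma_pos_of_pos (by linarith : 0 < x + 1 / 2)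
  have hq : 0 < x - 1 / 4 := by linarith
  rw [log_div (by positivity) (by positivity), log_mul (by positivity) (by positivity),
    log_mul (by positivity) hq.ne', log_pow, log_pow, gammaHalfDefect, gammaHalfDefect,
    show x + 1 + 1 / 2 = x + 1 / 2 + 1 by ring, Gamma_add_one (by linarith),
    Gamma_add_one hx0.ne', mul_div_mul_comm, log_mul (by positivity) (by positivity),
    log_div (by positivity) hx0.ne', show x + 1 - 1 / 4 = x + 3 / 4 by ring]
  push_cast
  ring

theorem gammaHalfDefect_add_one_le {x : ℝ} (hx : 1 / 4 < x) :
    gammaHalfDefect (x + 1) ≤ gammaHalfDefect x := by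
  rw [← sub_nonneg, gammaHalfDefect_sub_add_one hx]
  have hq : 0 < x - 1 / 4 := by linarith
  refine log_nonneg ((one_le_div (by positivity)).2 ?_)
  nlinarith

theorem gammaHalfDefect_sub_add_one_le {x : ℝ} (hx : 1 ≤ x) :
    gammaHalfDefect x - gammaHalfDefect (x + 1)
      ≤ (16 * x ^ 2)⁻¹ - (16 * (x + 1) ^ 2)⁻¹ := by
  have hden : 0 < (x + 1 / 2) ^ 2 * (x - 1 / 4) := by nlinarith
  rw [gammaHalfDefect_sub_add_one (by linarith)]
  refine (log_le_sub_one_of_pos (by positivity)).trans ?_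
  rw [div_sub_one hden.ne', inv_sub_inv (by positivity) (by positivity),
    div_le_div_iff₀ hden (by positivity)]
  nlinarith [pow_le_pow_left₀ zero_le_one hx 4, pow_le_pow_left₀ zero_le_one hx 3]

theorem tendsto_gammaHalfDefect_add_natCast (x : ℝ) :
    Tendsto (fun n : ℕ => gammaHalfDefect (x + n)) atTop (𝓝 0) :=
  tendsto_gammaHalfDefect_atTop.comp
    (tendsto_atTop_add_const_left _ x tendsto_natCast_atTop_atTop)

theorem gammaHalfDefect_nonneg {x : ℝ} (hx : 1 / 4 < x) : 0 ≤ gammaHalfDefect x := by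
  have hanti : Antitone fun n : ℕ => gammaHalfDefect (x + n) :=
    antitone_nat_of_succ_le fun n => by
      push_cast
      rw [← add_assoc]
      exact gammaHalfDefect_add_one_le (by linarith [n.cast_nonneg (α := ℝ)])
  simpa using hanti.le_of_tendsto (tendsto_gammaHalfDefect_add_natCast x) 0

theorem gammaHalfDefect_le {x : ℝ} (hx : 1 ≤ x) : gammaHalfDefect x ≤ (16 * x ^ 2)⁻¹ := by
  have hmono : Monotone fun n : ℕ => gammaHalfDefect (x + n) - (16 * (x + n) ^ 2)⁻¹ :=
    monotone_nat_of_le_succ fun n => by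
      have := gammaHalfDefect_sub_add_one_le (by linarith [n.cast_nonneg (α := ℝ)] : 1 ≤ x + n)
      push_cast
      rw [← add_assoc]
      linarith
  have hlim : Tendsto (fun n : ℕ => gammaHalfDefect (x + n) - (16 * (x + n) ^ 2)⁻¹) atTop
      (𝓝 0) := by
    have h := tendsto_atTop_add_const_left _ x tendsto_natCast_atTop_atTop
    simpa using (tendsto_gammaHalfDefect_add_natCast x).sub (tendsto_inv_atTop_zero.comp
      ((tendsto_pow_atTop two_ne_zero).comp h |>.const_mul_atTop (by norm_num : (0 : ℝ) < 16)))
  simpa [sub_nonpos] using hmono.ge_of_tendsto hlim 0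

theorem abs_log_one_sub_add_le {t : ℝ} (ht : |t| ≤ 1 / 2) :
    |log (1 - t) + t| ≤ 2 * t ^ 2 := by
  have h := abs_log_sub_add_sum_range_le (by linarith : |t| < 1) 1
  norm_num at h
  rw [add_comm]
  refine h.trans ?_
  rw [div_le_iff₀ (by linarith), ← sq_abs]
  nlinarith [abs_nonneg t, sq_nonneg |t|]

theorem abs_log_one_sub_add_add_le {t : ℝ} (ht : |t| ≤ 1 / 2) :
    |log (1 - t) + t + t ^ 2 / 2| ≤ 2 * |t| ^ 3 := by
  have h := abs_log_sub_add_sum_range_le (by linarith : |t| < 1) 2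
  norm_num [Finset.sum_range_succ] at h
  rw [show log (1 - t) + t + t ^ 2 / 2 = t + t ^ 2 / 2 + log (1 - t) by ring]
  refine h.trans ?_
  rw [div_le_iff₀ (by linarith)]
  nlinarith [pow_nonneg (abs_nonneg t) 3]

theorem abs_log_div_sub_le {x m : ℝ} (hm : 0 < m) (h : |x - m| ≤ m / 2) :
    |log (x / m) - (x - m) / m| ≤ 2 * (x - m) ^ 2 / m ^ 2 := by
  have ht : |(m - x) / m| ≤ 1 / 2 := by
    rw [abs_div, abs_sub_comm, abs_of_pos hm, div_le_iff₀ hm]; linarith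
  have := abs_log_one_sub_add_le ht
  rw [show 1 - (m - x) / m = x / m by field_simp; ring] at this
  convert this using 2 <;> ring

theorem abs_mul_log_div_add_sub_le {c m : ℝ} (hm : 0 < m) (h : |m - c| ≤ m / 2) :
    |c * log (c / m) + (m - c) - (m - c) ^ 2 / (2 * m)| ≤ 4 * |m - c| ^ 3 / m ^ 2 := by
  set t := (m - c) / m with ht_def
  have ht : |t| ≤ 1 / 2 := by
    rw [abs_div, abs_of_pos hm, div_le_iff₀ hm]; linarith
  have hc : c = m * (1 - t) := by rw [ht_def]; field_simp; ring
  have hR := abs_log_one_sub_add_add_le ht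
  have h1t : |1 - t| ≤ 3 / 2 := by
    have := abs_sub (1 : ℝ) t; norm_num at this; linarith
  have key : c * log (c / m) + (m - c) - (m - c) ^ 2 / (2 * m)
      = m * ((1 - t) * (log (1 - t) + t + t ^ 2 / 2) + t ^ 3 / 2) := by
    rw [show c / m = 1 - t by rw [hc]; field_simp, show m - c = m * t by rw [hc]; ring, hc]
    field_simp
    ring
  have hmc : 4 * |m - c| ^ 3 / m ^ 2 = m * (4 * |t| ^ 3) := by
    rw [ht_def, abs_div, abs_of_pos hm]; field_simp
  rw [key, hmc, abs_mul, abs_of_pos hm]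
  refine mul_le_mul_of_nonneg_left ?_ hm.le
  calc |(1 - t) * (log (1 - t) + t + t ^ 2 / 2) + t ^ 3 / 2|
      ≤ |1 - t| * |log (1 - t) + t + t ^ 2 / 2| + |t| ^ 3 / 2 := by
        refine (abs_add_le _ _).trans ?_
        rw [abs_mul, abs_div, abs_pow]; norm_num
    _ ≤ 3 / 2 * (2 * |t| ^ 3) + |t| ^ 3 / 2 := by gcongr
    _ ≤ 4 * |t| ^ 3 := by nlinarith [pow_nonneg (abs_nonneg t) 3]

theorem log_Rratio {δ a : ℝ} (hδ : -1 ≤ δ) (ha : 1 < a) :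
    log (Rratio δ a) = log (Gamma (a + 1 / 2) / Gamma a) - log (a + δ) / 2
      + (a - 1) * log ((a - 1) / (a + δ)) + (δ + 1) := by
  have hm : 0 < a + δ := by linarith
  have hG := Gamma_pos_of_pos (by linarith : 0 < a)
  have hG' := Gamma_pos_of_pos (by linarith : 0 < a + 1 / 2)
  have hB : 0 < betaFn a a := betaFn_pos (by linarith) (by linarith)
  rw [Rratio_eq hδ ha, log_mul (by positivity) (exp_pos _).ne', log_exp,
    log_mul (by positivity) (by positivity), log_inv, log_sqrt (by positivity),
    betaFn_self_eq (by linarith), log_div (by positivity) hG'.ne',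
    log_mul (by positivity) hG.ne', log_mul (by positivity) (by positivity),
    log_rpow two_pos, log_sqrt pi_pos.le, log_div pi_pos.ne' (by positivity),
    log_mul four_pos.ne' hm.ne', mul_comm 4 (a + δ), ← div_div,
    log_div (by positivity) four_pos.ne', log_div hG'.ne' hG.ne',
    show (4 : ℝ) = 2 ^ 2 by norm_num, log_pow]
  push_cast
  ring

theorem abs_log_expansion_sub_le {δ a : ℝ} (hδ : -1 ≤ δ) (ha : |δ| + 3 ≤ a) :
    |log ((a - 1 / 4) / (a + δ)) / 2 + (a - 1) * log ((a - 1) / (a + δ)) + (δ + 1)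
        - (δ * (δ + 1) + 3 / 4) / (2 * a)|
      ≤ (4 * (δ + 1 / 4) ^ 2 + 16 * |δ + 1| ^ 3 + |δ * (δ + 1) + 3 / 4| * |δ|) / a ^ 2 := by
  set m := a + δ with hm_def
  set T := δ * (δ + 1) + 3 / 4 with hT_def
  have ha3 : 3 ≤ a := by linarith [abs_nonneg δ]
  have hm : a / 2 ≤ m := by linarith [neg_abs_le δ]
  have hm0 : 0 < m := by linarith
  have hm2 : a ^ 2 ≤ 4 * m ^ 2 := by nlinarith
  have hscale {X : ℝ} (hX : 0 ≤ X) : X / m ^ 2 ≤ 4 * X / a ^ 2 := by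
    rw [div_le_div_iff₀ (by positivity) (by positivity)]; nlinarith
  have hL1 := abs_log_div_sub_le (x := a - 1 / 4) hm0 (by
    rw [abs_le]; constructor <;> linarith [le_abs_self δ, neg_abs_le δ])
  have hL2 := abs_mul_log_div_add_sub_le (c := a - 1) hm0 (by
    rw [abs_le]; constructor <;> linarith [le_abs_self δ, neg_abs_le δ])
  rw [show a - 1 / 4 - m = -(δ + 1 / 4) by rw [hm_def]; ring, neg_sq] at hL1
  rw [show m - (a - 1) = δ + 1 by rw [hm_def]; ring] at hL2
  -- the first-order terms of the two expansions add up to `T / (2 m)`, not `T / (2 a)`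
  have hsplit : log ((a - 1 / 4) / m) / 2 + (a - 1) * log ((a - 1) / m) + (δ + 1) - T / (2 * a)
      = (log ((a - 1 / 4) / m) - -(δ + 1 / 4) / m) / 2
        + ((a - 1) * log ((a - 1) / m) + (δ + 1) - (δ + 1) ^ 2 / (2 * m))
        + T * (-δ) / (2 * a * m) := by
    rw [hT_def, hm_def]
    have : a + δ ≠ 0 := hm0.ne'
    field_simp
    ring
  have b1 : |(log ((a - 1 / 4) / m) - -(δ + 1 / 4) / m) / 2| ≤ 4 * (δ + 1 / 4) ^ 2 / a ^ 2 := by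
    rw [abs_div, abs_two]
    calc _ ≤ 2 * (δ + 1 / 4) ^ 2 / m ^ 2 / 2 := by linarith
      _ = (δ + 1 / 4) ^ 2 / m ^ 2 := by ring
      _ ≤ _ := hscale (sq_nonneg _)
  have b2 : |(a - 1) * log ((a - 1) / m) + (δ + 1) - (δ + 1) ^ 2 / (2 * m)|
      ≤ 16 * |δ + 1| ^ 3 / a ^ 2 :=
    calc _ ≤ 4 * |δ + 1| ^ 3 / m ^ 2 := hL2
      _ ≤ 4 * (4 * |δ + 1| ^ 3) / a ^ 2 := hscale (by positivity)
      _ = _ := by ring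
  have b3 : |T * (-δ) / (2 * a * m)| ≤ |T| * |δ| / a ^ 2 := by
    rw [abs_div, abs_mul, abs_neg, abs_of_pos (by positivity : 0 < 2 * a * m)]
    gcongr
    nlinarith
  rw [hsplit, add_div, add_div]
  exact (abs_add_le _ _).trans (add_le_add ((abs_add_le _ _).trans (add_le_add b1 b2)) b3)

theorem abs_log_Rratio_sub_le {δ a : ℝ} (hδ : -1 ≤ δ) (ha : |δ| + 3 ≤ a) :
    |log (Rratio δ a) - (δ * (δ + 1) + 3 / 4) / (2 * a)|
      ≤ (1 + 4 * (δ + 1 / 4) ^ 2 + 16 * |δ + 1| ^ 3 + |δ * (δ + 1) + 3 / 4| * |δ|)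
        / a ^ 2 := by
  have ha3 : 3 ≤ a := by linarith [abs_nonneg δ]
  have hgamma : |gammaHalfDefect a / 2| ≤ 1 / a ^ 2 := by
    rw [abs_of_nonneg (div_nonneg (gammaHalfDefect_nonneg (by linarith)) two_pos.le)]
    calc gammaHalfDefect a / 2 ≤ (16 * a ^ 2)⁻¹ / 2 := by
          linarith [gammaHalfDefect_le (x := a) (by linarith)]
      _ ≤ 1 / a ^ 2 := by
        rw [inv_eq_one_div, div_div, div_le_div_iff₀ (by positivity) (by positivity)]
        nlinarith
  have hsplit : log (Rratio δ a) - (δ * (δ + 1) + 3 / 4) / (2 * a)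
      = gammaHalfDefect a / 2 + (log ((a - 1 / 4) / (a + δ)) / 2
        + (a - 1) * log ((a - 1) / (a + δ)) + (δ + 1) - (δ * (δ + 1) + 3 / 4) / (2 * a)) := by
    rw [log_Rratio hδ (by linarith), gammaHalfDefect,
      log_div (by linarith : 0 < a - 1 / 4).ne' (by linarith [neg_abs_le δ] : 0 < a + δ).ne']
    ring
  rw [hsplit]
  exact (abs_add_le _ _).trans
    ((add_le_add hgamma (abs_log_expansion_sub_le hδ ha)).trans_eq (by ring))

theorem logR_asymptotic (δ : ℝ) (hδ : -1 ≤ δ) :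
    ∃ C > (0:ℝ), ∃ A > (1:ℝ), ∀ a ≥ A,
      |Real.log (Rratio δ a) - (δ * (δ + 1) + 3 / 4) / (2 * a)| ≤ C / a ^ 2 := by
  refine ⟨_, ?_, |δ| + 3, by linarith [abs_nonneg δ],
    fun a ha => abs_log_Rratio_sub_le hδ ha⟩
  positivity
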